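/- arXiv:2603.20802 — 3 statements merged into one kernel-verified Lean document; each statement's English description precedes it below -/
import Mathlib

section
/- Let γ : [a,b] → X be a causal curve in a Lorentzian pre-length space that is a maximizer, i.e., τ(γ(a),γ(b)) = L_τ(γ) < ∞. Then every restriction γ|_{[s,t]} with a ≤ s ≤ t ≤ b is also a maximizer, and for a ≤ s ≤ t ≤ u ≤ b one has τ(γ(s),γ(u)) = τ(γ(s),γ(t)) + τ(γ(t),γ(u)). -/
/-!
Concatenating a partition of `[s,t]` with the steps `a → s` and `t → b` gives a partition of
`[a,b]`, so `τ(γa,γb) = L_τ(γ|[a,b]) ≤ τ(γa,γs) + L_τ(γ|[s,t]) + τ(γt,γb)`. The reverse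
triangle inequality along the causal curve gives `τ(γa,γs) + τ(γs,γt) + τ(γt,γb) ≤ τ(γa,γb)`.
As `τ(γa,γb) < ∞`, the outer terms are finite and cancel, so `τ(γs,γt) ≤ L_τ(γ|[s,t])`.
Additivity then follows on the maximizer `γ|[s,u]` from the partition `s < t < u`.
-/

open Set

/-- A Lorentzian pre-length space: a set `X` with an extended time separation
function `ell : X × X → {-∞} ∪ [0,∞]` (modelled as `EReal` whose values are either
`⊥ = -∞` or nonnegative) satisfying the reverse triangle inequality (with the
convention `-∞ + ∞ = -∞`, which is `EReal` addition) and `ell x x ≥ 0`. -/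
structure LPLS (X : Type*) where
  ell : X → X → EReal
  range_cond : ∀ x y, ell x y = ⊥ ∨ 0 ≤ ell x y
  rev_tri : ∀ x y z, ell x y + ell y z ≤ ell x z
  refl_nonneg : ∀ x, 0 ≤ ell x x

namespace LPLS

variable {X : Type*}

/-- The causal relation `x ≤ y` iff `ℓ(x,y) ≥ 0`. -/
def causal (L : LPLS X) (x y : X) : Prop := 0 ≤ L.ell x y

/-- The chronological (timelike) relation `x ≪ y` iff `ℓ(x,y) > 0`. -/
def chron (L : LPLS X) (x y : X) : Prop := 0 < L.ell x y

/-- The time separation function `τ = max(0, ℓ)`. -/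
noncomputable def tau (L : LPLS X) (x y : X) : EReal := max 0 (L.ell x y)

/-- The chronological future `I⁺(x)`. -/
def Iplus (L : LPLS X) (x : X) : Set X := {z | L.chron x z}

/-- The chronological past `I⁻(x)`. -/
def Iminus (L : LPLS X) (x : X) : Set X := {z | L.chron z x}

/-- A causal curve on `[a,b]`: continuous and totally ordered by `≤`. -/
def IsCausalCurve [TopologicalSpace X] (L : LPLS X) (γ : ℝ → X) (a b : ℝ) : Prop :=
  a ≤ b ∧ ContinuousOn γ (Icc a b) ∧
    ∀ ⦃s t : ℝ⦄, s ∈ Icc a b → t ∈ Icc a b → s < t → L.causal (γ s) (γ t)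

/-- A timelike curve on `[a,b]`: continuous and totally ordered by `≪`. -/
def IsTimelikeCurve [TopologicalSpace X] (L : LPLS X) (γ : ℝ → X) (a b : ℝ) : Prop :=
  a ≤ b ∧ ContinuousOn γ (Icc a b) ∧
    ∀ ⦃s t : ℝ⦄, s ∈ Icc a b → t ∈ Icc a b → s < t → L.chron (γ s) (γ t)

/-- A curve is null on `[a,b]` if no two of its points are chronologically related. -/
def IsNullOn (L : LPLS X) (γ : ℝ → X) (a b : ℝ) : Prop :=
  ∀ ⦃s t : ℝ⦄, s ∈ Icc a b → t ∈ Icc a b → s < t → ¬ L.chron (γ s) (γ t)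

/-- The `τ`-length of a curve on `[a,b]`:
`L_τ(γ) = inf { Σ τ(γ(t_{i-1}), γ(t_i)) : a = t₀ < t₁ < … < t_N = b }`. -/
noncomputable def len (L : LPLS X) (γ : ℝ → X) (a b : ℝ) : EReal :=
  ⨅ (N : ℕ) (t : Fin (N + 1) → ℝ) (_ : StrictMono t) (_ : t 0 = a)
      (_ : t (Fin.last N) = b),
    ∑ i : Fin N, L.tau (γ (t i.castSucc)) (γ (t i.succ))

/-- A (causal) maximizer: a causal curve whose length realizes the time separation
of its endpoints. -/
def IsMaximizer [TopologicalSpace X] (L : LPLS X) (γ : ℝ → X) (a b : ℝ) : Prop :=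
  L.IsCausalCurve γ a b ∧ L.len γ a b = L.tau (γ a) (γ b)

/-- Regularity: every causal maximizer is either timelike or null. -/
def Regular [TopologicalSpace X] (L : LPLS X) : Prop :=
  ∀ (γ : ℝ → X) (a b : ℝ), a < b → L.IsMaximizer γ a b →
    L.IsTimelikeCurve γ a b ∨ L.IsNullOn γ a b

/-- The topology is finer than the chronological topology: all `I±(x)` are open. -/
def ChronOpen [TopologicalSpace X] (L : LPLS X) : Prop :=
  ∀ x : X, IsOpen (L.Iplus x) ∧ IsOpen (L.Iminus x)

/-- Locally distinguishing: distinct points are distinguished by their futures or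
pasts within every common neighbourhood. -/
def LocallyDistinguishing [TopologicalSpace X] (L : LPLS X) : Prop :=
  ∀ ⦃x y : X⦄, x ≠ y → ∀ U : Set X, U ∈ nhds x → U ∈ nhds y →
    L.Iplus x ∩ U ≠ L.Iplus y ∩ U ∨ L.Iminus x ∩ U ≠ L.Iminus y ∩ U

/-- Not locally timelike isolating: every neighbourhood of every point meets its
chronological future and past. -/
def NotLocallyIsolating [TopologicalSpace X] (L : LPLS X) : Prop :=
  ∀ x : X, ∀ U ∈ nhds x, (L.Iplus x ∩ U).Nonempty ∧ (L.Iminus x ∩ U).Nonempty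

/-- The push-up property. -/
def PushUp (L : LPLS X) : Prop :=
  (∀ ⦃x y z : X⦄, L.chron x y → L.causal y z → L.chron x z) ∧
  (∀ ⦃x y z : X⦄, L.causal x y → L.chron y z → L.chron x z)

end LPLS


namespace EReal

lemma addLECancellable_of_ne_bot_of_ne_top {c : EReal} (hbot : c ≠ ⊥) (htop : c ≠ ⊤) :
    AddLECancellable c := by
  lift c to ℝ using ⟨htop, hbot⟩
  exact addLECancellable_coe c

end EReal

namespace LPLS

variable {X : Type*} (L : LPLS X)

lemma causal_refl (x : X) : L.causal x x := L.refl_nonneg x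

lemma causal_trans {x y z : X} (hxy : L.causal x y) (hyz : L.causal y z) : L.causal x z :=
  le_trans (by simpa using add_le_add hxy hyz) (L.rev_tri x y z)

lemma tau_nonneg (x y : X) : 0 ≤ L.tau x y := le_max_left _ _

lemma tau_ne_bot (x y : X) : L.tau x y ≠ ⊥ :=
  ne_bot_of_le_ne_bot EReal.zero_ne_bot (L.tau_nonneg x y)

lemma tau_eq_ell {x y : X} (h : L.causal x y) : L.tau x y = L.ell x y := max_eq_right h

lemma tau_add_tau_le {x y z : X} (hxy : L.causal x y) (hyz : L.causal y z) :
    L.tau x y + L.tau y z ≤ L.tau x z := by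
  rw [L.tau_eq_ell hxy, L.tau_eq_ell hyz, L.tau_eq_ell (L.causal_trans hxy hyz)]
  exact L.rev_tri x y z

def HasPartitionSumLE (γ : ℝ → X) (a b : ℝ) (x : EReal) : Prop :=
  ∃ (N : ℕ) (t : Fin (N + 1) → ℝ), StrictMono t ∧ t 0 = a ∧ t (Fin.last N) = b ∧
    ∑ i : Fin N, L.tau (γ (t i.castSucc)) (γ (t i.succ)) ≤ x

variable {L} {γ : ℝ → X}

lemma len_le_of_hasPartitionSumLE {a b : ℝ} {x : EReal} (h : L.HasPartitionSumLE γ a b x) :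
    L.len γ a b ≤ x := by
  obtain ⟨N, t, hmono, h0, hlast, hsum⟩ := h
  exact le_trans (iInf_le_of_le N (iInf_le_of_le t (iInf_le_of_le hmono
    (iInf_le_of_le h0 (iInf_le_of_le hlast le_rfl))))) hsum

lemma le_len_of_forall_hasPartitionSumLE {a b : ℝ} {y : EReal}
    (h : ∀ x, L.HasPartitionSumLE γ a b x → y ≤ x) : y ≤ L.len γ a b :=
  le_iInf fun N => le_iInf fun t => le_iInf fun hmono => le_iInf fun h0 => le_iInf fun hlast =>
    h _ ⟨N, t, hmono, h0, hlast, le_rfl⟩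

namespace HasPartitionSumLE

variable {a b s t : ℝ} {x y : EReal}

lemma mono (h : L.HasPartitionSumLE γ a b x) (hxy : x ≤ y) : L.HasPartitionSumLE γ a b y := by
  obtain ⟨N, t, hmono, h0, hlast, hsum⟩ := h
  exact ⟨N, t, hmono, h0, hlast, hsum.trans hxy⟩

lemma self (a : ℝ) : L.HasPartitionSumLE γ a a 0 :=
  ⟨0, fun _ => a, Fin.strictMono_iff_lt_succ.2 fun i => i.elim0, rfl, rfl, by simp⟩

lemma cons (h : L.HasPartitionSumLE γ s t x) (has : a ≤ s) :
    L.HasPartitionSumLE γ a t (L.tau (γ a) (γ s) + x) := by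
  rcases has.eq_or_lt with rfl | has
  · exact h.mono (le_add_of_nonneg_left (L.tau_nonneg _ _))
  obtain ⟨N, p, hmono, h0, hlast, hsum⟩ := h
  refine ⟨N + 1, Fin.cons a p, ?_, rfl, by rw [← Fin.succ_last, Fin.cons_succ, hlast], ?_⟩
  · exact Fin.strictMono_cons.2 ⟨fun j => has.trans_le (h0 ▸ hmono.monotone (Fin.zero_le j)),
      hmono⟩
  · rw [Fin.sum_univ_succ]
    simp only [Fin.castSucc_zero, Fin.cons_zero, Fin.cons_succ, ← Fin.succ_castSucc, h0]
    gcongr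

lemma snoc (h : L.HasPartitionSumLE γ a t x) (htb : t ≤ b) :
    L.HasPartitionSumLE γ a b (x + L.tau (γ t) (γ b)) := by
  rcases htb.eq_or_lt with rfl | htb
  · exact h.mono (le_add_of_nonneg_right (L.tau_nonneg _ _))
  obtain ⟨N, p, hmono, h0, hlast, hsum⟩ := h
  refine ⟨N + 1, Fin.snoc p b, ?_, ?_, Fin.snoc_last _ _, ?_⟩
  · rw [Fin.strictMono_iff_lt_succ]
    intro i
    induction i using Fin.lastCases with
    | last => simpa [Fin.snoc_castSucc, Fin.snoc_last, hlast] using htb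
    | cast j =>
        rw [Fin.succ_castSucc, Fin.snoc_castSucc, Fin.snoc_castSucc]
        exact hmono Fin.castSucc_lt_succ
  · rw [← Fin.castSucc_zero, Fin.snoc_castSucc, h0]
  · rw [Fin.sum_univ_castSucc]
    simp only [Fin.succ_castSucc, Fin.snoc_castSucc, Fin.succ_last, Fin.snoc_last, hlast]
    gcongr

lemma tau (hab : a ≤ b) : L.HasPartitionSumLE γ a b (L.tau (γ a) (γ b)) := by
  simpa using (self a).snoc hab

end HasPartitionSumLE

lemma len_le_tau {a b : ℝ} (hab : a ≤ b) : L.len γ a b ≤ L.tau (γ a) (γ b) :=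
  len_le_of_hasPartitionSumLE (.tau hab)

variable [TopologicalSpace X] {a b s t u : ℝ}

lemma IsCausalCurve.causal_of_le (hγ : L.IsCausalCurve γ a b) (hs : s ∈ Icc a b)
    (ht : t ∈ Icc a b) (hst : s ≤ t) : L.causal (γ s) (γ t) := by
  rcases hst.eq_or_lt with rfl | hst
  · exact L.causal_refl _
  · exact hγ.2.2 hs ht hst

lemma IsCausalCurve.mono (hγ : L.IsCausalCurve γ a b) (has : a ≤ s) (hst : s ≤ t)
    (htb : t ≤ b) : L.IsCausalCurve γ s t :=
  ⟨hst, hγ.2.1.mono (Icc_subset_Icc has htb),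
    fun _ _ hu hv huv => hγ.2.2 (Icc_subset_Icc has htb hu) (Icc_subset_Icc has htb hv) huv⟩

lemma IsMaximizer.tau_add_tau_eq (hγ : L.IsMaximizer γ s u) (hst : s ≤ t) (htu : t ≤ u) :
    L.tau (γ s) (γ u) = L.tau (γ s) (γ t) + L.tau (γ t) (γ u) := by
  have hs : s ∈ Icc s u := ⟨le_rfl, hst.trans htu⟩
  have ht : t ∈ Icc s u := ⟨hst, htu⟩
  have hu : u ∈ Icc s u := ⟨hst.trans htu, le_rfl⟩
  refine le_antisymm ?_ (L.tau_add_tau_le (hγ.1.causal_of_le hs ht hst)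
    (hγ.1.causal_of_le ht hu htu))
  rw [← hγ.2]
  exact len_le_of_hasPartitionSumLE ((HasPartitionSumLE.tau htu).cons hst)

lemma IsMaximizer.tau_le_len (hγ : L.IsMaximizer γ a b) (hfin : L.tau (γ a) (γ b) ≠ ⊤)
    (has : a ≤ s) (hst : s ≤ t) (htb : t ≤ b) : L.tau (γ s) (γ t) ≤ L.len γ s t := by
  have hcausal {p q : ℝ} (hap : a ≤ p) (hpq : p ≤ q) (hqb : q ≤ b) : L.causal (γ p) (γ q) :=
    hγ.1.causal_of_le ⟨hap, hpq.trans hqb⟩ ⟨hap.trans hpq, hqb⟩ hpq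
  have hsum : L.tau (γ a) (γ s) + L.tau (γ s) (γ t) + L.tau (γ t) (γ b) ≤ L.tau (γ a) (γ b) :=
    calc _ ≤ L.tau (γ a) (γ t) + L.tau (γ t) (γ b) := by
          gcongr
          exact L.tau_add_tau_le (hcausal le_rfl has (hst.trans htb)) (hcausal has hst htb)
      _ ≤ _ := L.tau_add_tau_le (hcausal le_rfl (has.trans hst) htb)
          (hcausal (has.trans hst) htb le_rfl)
  have has_fin : L.tau (γ a) (γ s) ≠ ⊤ := ne_top_of_le_ne_top hfin <| hsum.trans' <|
    (le_add_of_nonneg_right (L.tau_nonneg _ _)).trans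
      (le_add_of_nonneg_right (L.tau_nonneg _ _))
  have htb_fin : L.tau (γ t) (γ b) ≠ ⊤ := ne_top_of_le_ne_top hfin <| hsum.trans' <|
    le_add_of_nonneg_left (add_nonneg (L.tau_nonneg _ _) (L.tau_nonneg _ _))
  refine le_len_of_forall_hasPartitionSumLE fun x hx => ?_
  have hbound : L.tau (γ a) (γ b) ≤ L.tau (γ a) (γ s) + x + L.tau (γ t) (γ b) :=
    hγ.2 ▸ len_le_of_hasPartitionSumLE ((hx.cons has).snoc htb)
  have hcancel_left := EReal.addLECancellable_of_ne_bot_of_ne_top (L.tau_ne_bot _ _) has_fin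
  have hcancel_right := EReal.addLECancellable_of_ne_bot_of_ne_top (L.tau_ne_bot _ _) htb_fin
  exact hcancel_left.add_le_add_iff_left.1 <|
    hcancel_right.add_le_add_iff_right.1 (hsum.trans hbound)

lemma IsMaximizer.restrict (hγ : L.IsMaximizer γ a b) (hfin : L.tau (γ a) (γ b) ≠ ⊤)
    (has : a ≤ s) (hst : s ≤ t) (htb : t ≤ b) : L.IsMaximizer γ s t :=
  ⟨hγ.1.mono has hst htb, le_antisymm (len_le_tau hst) (hγ.tau_le_len hfin has hst htb)⟩

end LPLS

/-- restrictions of a maximizer are maximizers, and `τ` is additive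
along a maximizer. -/
theorem stmt3 {X : Type*} [TopologicalSpace X] (L : LPLS X) (γ : ℝ → X) (a b : ℝ)
    (hmax : L.IsMaximizer γ a b) (hfin : L.tau (γ a) (γ b) ≠ ⊤) :
    (∀ s t : ℝ, a ≤ s → s ≤ t → t ≤ b → L.IsMaximizer γ s t) ∧
    (∀ s t u : ℝ, a ≤ s → s ≤ t → t ≤ u → u ≤ b →
      L.tau (γ s) (γ u) = L.tau (γ s) (γ t) + L.tau (γ t) (γ u)) :=
  ⟨fun _ _ has hst htb => hmax.restrict hfin has hst htb,
    fun _ _ _ has hst htu hub =>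
      (hmax.restrict hfin has (hst.trans htu) hub).tau_add_tau_eq hst htu⟩
end

section
/- Let γ : [0,1] → X be a maximizer in a Lorentzian pre-length space satisfying the push-up property. If there exist t₀ < t₁ with γ(t₀) ≤ γ(t₁) but γ(t₀) not ≪ γ(t₁), then the whole segment γ|_{[t₀,t₁]} is a null curve, i.e., γ(s) not ≪ γ(t) for all t₀ ≤ s < t ≤ t₁. -/
open Set

/-- if a maximizer `γ : [0,1] → X` (in a space with push-up) has a
null relation `γ(t₀) ≤ γ(t₁)`, `γ(t₀) ≪̸ γ(t₁)`, then the whole segment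
`γ|_{[t₀,t₁]}` is null. -/
theorem stmt5 {X : Type*} [TopologicalSpace X] (L : LPLS X) (hpu : L.PushUp)
    (γ : ℝ → X) (hmax : L.IsMaximizer γ 0 1) (t₀ t₁ : ℝ)
    (h0 : 0 ≤ t₀) (h01 : t₀ < t₁) (h1 : t₁ ≤ 1)
    (hc : L.causal (γ t₀) (γ t₁)) (hnc : ¬ L.chron (γ t₀) (γ t₁)) :
    ∀ s t : ℝ, t₀ ≤ s → s < t → t ≤ t₁ → ¬ L.chron (γ s) (γ t) := by
  intro s t hs hst ht hchron
  obtain ⟨hab, hcont, hcausal⟩ := hmax.1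
  have hsI : s ∈ Icc (0:ℝ) 1 := ⟨le_trans h0 hs, le_trans (le_of_lt hst) (le_trans ht h1)⟩
  have htI : t ∈ Icc (0:ℝ) 1 := ⟨le_trans h0 (le_trans hs (le_of_lt hst)), le_trans ht h1⟩
  have ht0I : t₀ ∈ Icc (0:ℝ) 1 := ⟨h0, le_trans (le_of_lt h01) h1⟩
  have ht1I : t₁ ∈ Icc (0:ℝ) 1 := ⟨le_trans h0 (le_of_lt h01), h1⟩
  have h1' : L.chron (γ t₀) (γ t) := by
    rcases eq_or_lt_of_le hs with h | h
    · rw [h]; exact hchron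
    · exact hpu.2 (hcausal ht0I hsI h) hchron
  have h2' : L.chron (γ t₀) (γ t₁) := by
    rcases eq_or_lt_of_le ht with h | h
    · rw [h] at h1'; exact h1'
    · exact hpu.1 h1' (hcausal htI ht1I h)
  exact hnc h2'
end

section
/- Let X be a Lorentzian pre-length space that is timelike path-connected (every pair x ≪ y is joined by a timelike curve). If X is distinguishing (I⁺(x) = I⁺(y) implies x = y, and I⁻(x) = I⁻(y) implies x = y), then X is locally distinguishing: for all x ≠ y and every neighbourhood U of x and y, I⁺(x) ∩ U ≠ I⁺(y) ∩ U or I⁻(x) ∩ U ≠ I⁻(y) ∩ U. -/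
open Set

open Filter Topology

namespace LPLS

variable {X : Type*}

lemma chron_trans (L : LPLS X) {x y z : X} (hxy : L.chron x y) (hyz : L.chron y z) :
    L.chron x z :=
  calc (0 : EReal) < L.ell x y := hxy
    _ ≤ L.ell x y + L.ell y z := le_add_of_nonneg_right hyz.le
    _ ≤ L.ell x z := L.rev_tri x y z

lemma IsTimelikeCurve.exists_mem_Ioo_mem_nhds [TopologicalSpace X] {L : LPLS X} {γ : ℝ → X}
    {a b : ℝ} (hγ : L.IsTimelikeCurve γ a b) (hab : a < b) {U : Set X} (hU : U ∈ 𝓝 (γ a)) :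
    ∃ s ∈ Ioo a b, γ s ∈ U := by
  have hcont : Tendsto γ (𝓝[Ioo a b] a) (𝓝 (γ a)) :=
    (hγ.2.1 a (left_mem_Icc.2 hab.le)).mono_left (nhdsWithin_mono _ Ioo_subset_Icc_self)
  have : (𝓝[Ioo a b] a).NeBot := left_nhdsWithin_Ioo_neBot hab
  exact nonempty_of_mem (inter_mem self_mem_nhdsWithin (hcont hU))

lemma Iplus_subset_of_Iplus_inter_eq [TopologicalSpace X] (L : LPLS X)
    (hpath : ∀ x y : X, L.chron x y → ∃ γ : ℝ → X,
      L.IsTimelikeCurve γ 0 1 ∧ γ 0 = x ∧ γ 1 = y)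
    {x y : X} {U : Set X} (hU : U ∈ 𝓝 x) (hxy : L.Iplus x ∩ U = L.Iplus y ∩ U) :
    L.Iplus x ⊆ L.Iplus y := by
  intro z hxz
  obtain ⟨γ, hγ, rfl, rfl⟩ := hpath x z hxz
  obtain ⟨s, ⟨hs0, hs1⟩, hsU⟩ := hγ.exists_mem_Ioo_mem_nhds zero_lt_one hU
  have hs : s ∈ Icc (0 : ℝ) 1 := ⟨hs0.le, hs1.le⟩
  have hys : γ s ∈ L.Iplus y ∩ U :=
    hxy ▸ ⟨hγ.2.2 (left_mem_Icc.2 zero_le_one) hs hs0, hsU⟩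
  exact L.chron_trans hys.1 (hγ.2.2 hs (right_mem_Icc.2 zero_le_one) hs1)

end LPLS

theorem stmt9_general {X : Type*} [TopologicalSpace X] (L : LPLS X)
    (hpath : ∀ x y : X, L.chron x y → ∃ γ : ℝ → X,
      L.IsTimelikeCurve γ 0 1 ∧ γ 0 = x ∧ γ 1 = y)
    (hfd : ∀ x y : X, L.Iplus x = L.Iplus y → x = y) :
    L.LocallyDistinguishing := by
  intro x y hne U hUx hUy
  refine Or.inl fun hEq => hne (hfd x y ?_)
  exact (L.Iplus_subset_of_Iplus_inter_eq hpath hUx hEq).antisymm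
    (L.Iplus_subset_of_Iplus_inter_eq hpath hUy hEq.symm)

/-- a timelike path-connected, distinguishing Lorentzian
pre-length space (topology finer than the chronological topology) is locally
distinguishing. -/
theorem stmt9 {X : Type*} [TopologicalSpace X] (L : LPLS X) (hopen : L.ChronOpen)
    (hpath : ∀ x y : X, L.chron x y → ∃ γ : ℝ → X,
      L.IsTimelikeCurve γ 0 1 ∧ γ 0 = x ∧ γ 1 = y)
    (hfd : ∀ x y : X, L.Iplus x = L.Iplus y → x = y)
    (hpd : ∀ x y : X, L.Iminus x = L.Iminus y → x = y) :
    L.LocallyDistinguishing :=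
  stmt9_general L hpath hfd
end
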